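/- arXiv:2107.10656 — 3 statements merged into one kernel-verified Lean document; each statement's English description precedes it below -/
import Mathlib

section
/- If a simplex \(\triangle\) contained in the closed unit ball \(B_2^d\) maximizes the mean width among all simplices contained in \(B_2^d\), then all of its vertices lie on the unit sphere \(\mathbb{S}^{d-1}\). -/
open MeasureTheory Metric Set
open scoped RealInnerProductSpace ENNReal NNReal

/-- The uniform probability measure on the unit sphere `𝕊^{d-1} ⊂ ℝ^d`. -/
noncomputable def sphereProb (d : ℕ) : Measure (EuclideanSpace ℝ (Fin d)) :=
  ((μH[(d : ℝ) - 1]).restrict (sphere (0 : EuclideanSpace ℝ (Fin d)) 1) Set.univ)⁻¹ •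
    (μH[(d : ℝ) - 1]).restrict (sphere (0 : EuclideanSpace ℝ (Fin d)) 1)

/-- The support function `h_K(u) = max_{x ∈ K} u ⬝ x`. -/
noncomputable def suppFn {d : ℕ} (K : Set (EuclideanSpace ℝ (Fin d)))
    (u : EuclideanSpace ℝ (Fin d)) : ℝ :=
  ⨆ x : K, ⟪u, (x : EuclideanSpace ℝ (Fin d))⟫

/-- The mean width `w(K) = 2 ∫ h_K dμ`. -/
noncomputable def meanWidth {d : ℕ} (K : Set (EuclideanSpace ℝ (Fin d))) : ℝ :=
  2 * ∫ u, suppFn K u ∂(sphereProb d)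

abbrev E (d : ℕ) : Type := EuclideanSpace ℝ (Fin d)


lemma inner_le_G {d n : ℕ} (w : Fin (n + 1) → E d) (u : E d) {x : E d}
    (hx : x ∈ convexHull ℝ (Set.range w)) : ⟪u, x⟫ ≤ ⨆ j, ⟪u, w j⟫ := by
  have hbdd : BddAbove (Set.range fun j => ⟪u, w j⟫) := Set.Finite.bddAbove (Set.finite_range _)
  have hconv : Convex ℝ {y : E d | ⟪u, y⟫ ≤ ⨆ j, ⟪u, w j⟫} := by
    apply convex_halfSpace_le
    exact ⟨fun a b => inner_add_right u a b, fun c a => real_inner_smul_right u a c⟩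
  have hsub : Set.range w ⊆ {y : E d | ⟪u, y⟫ ≤ ⨆ j, ⟪u, w j⟫} := by
    rintro _ ⟨j, rfl⟩
    exact le_ciSup (f := fun j => ⟪u, w j⟫) hbdd j
  exact convexHull_min hsub hconv hx

lemma suppFn_hull {d n : ℕ} (w : Fin (n + 1) → E d) (u : E d) :
    suppFn (convexHull ℝ (Set.range w)) u = ⨆ j, ⟪u, w j⟫ := by
  have hmem : ∀ j, w j ∈ convexHull ℝ (Set.range w) := fun j =>
    subset_convexHull ℝ _ (Set.mem_range_self j)
  have hne : Nonempty (convexHull ℝ (Set.range w) : Set (E d)) := ⟨⟨w 0, hmem 0⟩⟩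
  apply le_antisymm
  · exact ciSup_le fun x => inner_le_G w u x.2
  · refine ciSup_le fun j => ?_
    refine le_ciSup (f := fun x : (convexHull ℝ (Set.range w) : Set (E d)) => ⟪u, (x : E d)⟫) ?_ ⟨w j, hmem j⟩
    refine ⟨⨆ j, ⟪u, w j⟫, ?_⟩
    rintro _ ⟨x, rfl⟩
    exact inner_le_G w u x.2


lemma unit_inner_lt {d : ℕ} {p x : E d} (hp : ‖p‖ = 1) (hx : ‖x‖ ≤ 1) (hne : x ≠ p) :
    ⟪p, x⟫ < 1 := by
  have hle : ⟪p, x⟫ ≤ 1 := le_trans (real_inner_le_norm p x) (by rw [hp, one_mul]; exact hx)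
  rcases lt_or_eq_of_le hle with h | h
  · exact h
  · exfalso
    have hx1 : ‖x‖ = 1 := le_antisymm hx (by nlinarith [real_inner_le_norm p x])
    have h2 : ⟪p, x⟫ = ‖p‖ * ‖x‖ := by rw [hp, hx1, one_mul]; exact h
    have h3 := inner_eq_norm_mul_iff_real.mp h2
    rw [hp, hx1, one_smul, one_smul] at h3
    exact hne h3.symm

lemma exists_unit_notin {d : ℕ} (hd : 1 ≤ d) (v : Fin (d + 1) → E d) {i : Fin (d + 1)}
    (hi : ‖v i‖ < 1) : ∃ p : E d, ‖p‖ = 1 ∧ p ∉ Set.range v := by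
  rcases eq_or_lt_of_le hd with hd1 | hd2
  · -- d = 1
    have hd1' : d = 1 := hd1.symm
    subst hd1'
    set p1 : E 1 := EuclideanSpace.single 0 (1 : ℝ) with hp1
    set p2 : E 1 := EuclideanSpace.single 0 (-1 : ℝ) with hp2
    have hn1 : ‖p1‖ = 1 := by simp [hp1]
    have hn2 : ‖p2‖ = 1 := by simp [hp2]
    by_contra hcon
    push_neg at hcon
    obtain ⟨j1, hj1⟩ := hcon p1 hn1
    obtain ⟨j2, hj2⟩ := hcon p2 hn2
    have h12 : j1 ≠ j2 := by
      rintro rfl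
      rw [hj1] at hj2
      have := congrArg (fun x : E 1 => x 0) hj2
      simp [hp1, hp2, EuclideanSpace.single_apply] at this
      linarith
    have hij1 : i ≠ j1 := by rintro rfl; rw [hj1, hn1] at hi; linarith
    have hij2 : i ≠ j2 := by rintro rfl; rw [hj2, hn2] at hi; linarith
    have := i.is_lt; have := j1.is_lt; have := j2.is_lt
    have hv1 : i.val ≠ j1.val := fun h => hij1 (Fin.ext h)
    have hv2 : i.val ≠ j2.val := fun h => hij2 (Fin.ext h)
    have hv3 : j1.val ≠ j2.val := fun h => h12 (Fin.ext h)
    omega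
  · -- d ≥ 2
    have h0 : (0 : ℕ) < d := by omega
    have h1 : (1 : ℕ) < d := hd2
    set e0 : Fin d := ⟨0, h0⟩
    set e1 : Fin d := ⟨1, h1⟩
    have hne01 : e0 ≠ e1 := by simp [e0, e1, Fin.ext_iff]
    set c : ℝ → E d := fun t =>
      EuclideanSpace.single e0 t + EuclideanSpace.single e1 (Real.sqrt (1 - t ^ 2)) with hc
    have hcoord : ∀ t, c t e0 = t := by
      intro t
      simp [hc, EuclideanSpace.single_apply, hne01, Ne.symm hne01]
    have hinj : Function.Injective c := fun s t hst => by
      have := congrArg (fun x : E d => x e0) hst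
      simpa [hcoord] using this
    have hfin : (c ⁻¹' Set.range v).Finite :=
      Set.Finite.preimage hinj.injOn (Set.finite_range v)
    have hIoo : (Set.Ioo (-1 : ℝ) 1).Infinite := Set.Ioo_infinite (by norm_num)
    obtain ⟨t, htIoo, htpre⟩ := (hIoo.diff hfin).nonempty
    refine ⟨c t, ?_, htpre⟩
    have ht2 : t ^ 2 ≤ 1 := by
      rcases htIoo with ⟨h1', h2'⟩; nlinarith
    have hnorm2 : ‖c t‖ ^ 2 = 1 := by
      have hinner : ⟪EuclideanSpace.single e0 t, EuclideanSpace.single e1 (Real.sqrt (1 - t ^ 2))⟫ = 0 := by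
        rw [EuclideanSpace.inner_single_left]
        simp [EuclideanSpace.single_apply, hne01]
      rw [hc]
      rw [@norm_add_sq_real]
      rw [hinner]
      rw [EuclideanSpace.norm_single, EuclideanSpace.norm_single]
      rw [Real.norm_eq_abs, Real.norm_eq_abs, sq_abs, sq_abs, Real.sq_sqrt (by linarith)]
      ring
    nlinarith [norm_nonneg (c t)]


lemma exists_good_p {d : ℕ} (hd : 1 ≤ d) (v : Fin (d + 1) → E d) {i : Fin (d + 1)}
    (hv : ∀ j, ‖v j‖ ≤ 1) (hi : ‖v i‖ < 1) :
    ∃ p : E d, ‖p‖ = 1 ∧ (∀ j, ⟪p, v j⟫ < 1) ∧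
      v i ∈ convexHull ℝ (insert p (v '' {j | j ≠ i})) := by
  set T : Set (E d) := v '' {j | j ≠ i} with hT
  by_cases hA : v i ∈ convexHull ℝ T
  · obtain ⟨p, hp1, hp2⟩ := exists_unit_notin hd v hi
    exact ⟨p, hp1, fun j => unit_inner_lt hp1 (hv j) (fun h => hp2 ⟨j, h⟩),
      convexHull_mono (Set.subset_insert _ _) hA⟩
  · -- case B
    have hnt : Nontrivial (Fin (d + 1)) := Fin.nontrivial_iff_two_le.mpr (by omega)
    obtain ⟨j0, hj0⟩ := exists_ne i
    set c : E d := v j0 with hc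
    have hcT : c ∈ T := ⟨j0, hj0, rfl⟩
    have hcH : c ∈ convexHull ℝ T := subset_convexHull ℝ _ hcT
    have hne : v i - c ≠ 0 := by
      intro h
      exact hA ((sub_eq_zero.mp h) ▸ hcH)
    have hpos : 0 < ‖v i - c‖ := norm_pos_iff.mpr hne
    set t0 : ℝ := (1 + ‖v i‖) / ‖v i - c‖ with ht0
    have ht0pos : 0 < t0 := div_pos (by positivity) hpos
    set f : ℝ → E d := fun t => v i + t • (v i - c) with hf
    have hcont : Continuous fun t => ‖f t‖ := by
      apply Continuous.norm
      exact continuous_const.add (continuous_id.smul continuous_const)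
    have hg0 : ‖f 0‖ = ‖v i‖ := by simp [hf]
    have hgt0 : 1 ≤ ‖f t0‖ := by
      have hb : ‖t0 • (v i - c)‖ = 1 + ‖v i‖ := by
        rw [norm_smul, Real.norm_eq_abs, abs_of_pos ht0pos, ht0]
        field_simp
      have heq : t0 • (v i - c) = f t0 - v i := by rw [hf]; module
      have htri : ‖t0 • (v i - c)‖ ≤ ‖f t0‖ + ‖v i‖ := by
        rw [heq]; exact norm_sub_le _ _
      linarith
    obtain ⟨ts, hts, htseq⟩ : ∃ ts ∈ Set.Icc (0 : ℝ) t0, ‖f ts‖ = 1 := by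
      have := intermediate_value_Icc (le_of_lt ht0pos) hcont.continuousOn
      have h1 : (1 : ℝ) ∈ Set.Icc ‖f 0‖ ‖f t0‖ := ⟨by rw [hg0]; exact hi.le, hgt0⟩
      exact this h1
    have htspos : 0 < ts := by
      rcases lt_or_eq_of_le hts.1 with h | h
      · exact h
      · exfalso; rw [← h, hg0] at htseq; rw [htseq] at hi; exact lt_irrefl _ hi
    set p : E d := f ts with hp
    have hvi_seg : v i ∈ segment ℝ c p := by
      refine ⟨ts / (1 + ts), 1 / (1 + ts), by positivity, by positivity, ?_, ?_⟩
      · field_simp; ring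
      · rw [hp, hf]
        match_scalars <;> field_simp <;> ring
    have hmem : v i ∈ convexHull ℝ (insert p T) :=
      segment_subset_convexHull (Set.mem_insert_iff.mpr (Or.inr hcT)) (Set.mem_insert p T) hvi_seg
    refine ⟨p, htseq, fun j => ?_, hmem⟩
    by_contra hcon
    push_neg at hcon
    have hvj : v j = p := by
      by_contra hne'
      exact absurd (unit_inner_lt htseq (hv j) hne') (not_lt.mpr hcon)
    have hji : j ≠ i := by
      rintro rfl
      rw [hvj, htseq] at hi; exact lt_irrefl _ hi
    have hpT : p ∈ T := hvj ▸ ⟨j, hji, rfl⟩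
    have hpH : p ∈ convexHull ℝ T := subset_convexHull ℝ _ hpT
    exact hA ((convex_convexHull ℝ T).segment_subset hcH hpH hvi_seg)


-- positivity of Hausdorff measure of a Euclidean ball in E n
lemma hm_ball_pos (n : ℕ) {δ : ℝ} (hδ : 0 < δ) :
    0 < μH[(n : ℝ)] (Metric.ball (0 : E n) δ) := by
  have hlip : LipschitzWith 1 (WithLp.equiv 2 (Fin n → ℝ)) := PiLp.lipschitzWith_ofLp 2 _
  have h1 := hlip.hausdorffMeasure_image_le (d := (n : ℝ)) (by positivity) (Metric.ball (0 : E n) δ)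
  simp only [ENNReal.coe_one, ENNReal.one_rpow, one_mul] at h1
  have hvol : (μH[(n : ℝ)] : Measure (Fin n → ℝ)) = volume := by
    have := hausdorffMeasure_pi_real (ι := Fin n)
    simpa using this
  have hopen : IsOpen ((WithLp.equiv 2 (Fin n → ℝ)) '' (Metric.ball (0 : E n) δ)) := by
    have : (WithLp.equiv 2 (Fin n → ℝ)) '' (Metric.ball (0 : E n) δ)
        = (WithLp.equiv 2 (Fin n → ℝ)).symm ⁻¹' (Metric.ball (0 : E n) δ) :=
      Equiv.image_eq_preimage_symm _ _
    rw [this]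
    exact (PiLp.continuous_toLp 2 _).isOpen_preimage _ isOpen_ball
  have hne : ((WithLp.equiv 2 (Fin n → ℝ)) '' (Metric.ball (0 : E n) δ)).Nonempty :=
    ⟨_, Set.mem_image_of_mem _ (Metric.mem_ball_self hδ)⟩
  have hpos : 0 < μH[(n : ℝ)] ((WithLp.equiv 2 (Fin n → ℝ)) '' (Metric.ball (0 : E n) δ)) := by
    rw [hvol]
    exact hopen.measure_pos volume hne
  exact lt_of_lt_of_le hpos h1


-- finiteness of Hausdorff measure of the unit cube in E m
lemma hm_cube_fin (m : ℕ) : μH[(m : ℝ)] {y : E m | ∀ j, |y j| ≤ 1} ≠ ∞ := by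
  set Q : Set (E m) := {y : E m | ∀ j, |y j| ≤ 1} with hQ
  have halip : AntilipschitzWith ((Fintype.card (Fin m) : ℝ≥0) ^ ((1 : ℝ≥0∞) / 2).toReal)
      (WithLp.equiv 2 (Fin m → ℝ)) := PiLp.antilipschitzWith_ofLp 2 _
  have h1 := halip.le_hausdorffMeasure_image (d := (m : ℝ)) (by positivity) Q
  have hvol : (μH[(m : ℝ)] : Measure (Fin m → ℝ)) = volume := by
    have := hausdorffMeasure_pi_real (ι := Fin m)
    simpa using this
  rw [hvol] at h1
  have hsub : (WithLp.equiv 2 (Fin m → ℝ)) '' Q ⊆ Set.pi Set.univ (fun _ : Fin m => Set.Icc (-1 : ℝ) 1) := by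
    rintro - ⟨y, hy, rfl⟩
    intro j _
    exact abs_le.mp (hy j)
  have h2 : volume ((WithLp.equiv 2 (Fin m → ℝ)) '' Q) ≤ (ENNReal.ofReal 2) ^ m := by
    refine (measure_mono hsub).trans ?_
    rw [volume_pi_pi]
    simp [Real.volume_Icc]
    norm_num
  have hK : (((Fintype.card (Fin m) : ℝ≥0) ^ ((1 : ℝ≥0∞) / 2).toReal : ℝ≥0) : ℝ≥0∞) ^ (m : ℝ) ≠ ∞ :=
    ENNReal.rpow_ne_top_of_nonneg (by positivity) ENNReal.coe_ne_top
  refine ne_top_of_le_ne_top ?_ (h1.trans (mul_le_mul_right h2 _))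
  exact ENNReal.mul_ne_top hK (ENNReal.pow_ne_top ENNReal.ofReal_ne_top)



set_option maxHeartbeats 1000000 in
lemma cap_pos {m : ℕ} {p : E (m + 1)} (hp : ‖p‖ = 1) {ε : ℝ} (hε : 0 < ε) :
    0 < μH[(m : ℝ)] (Metric.ball p ε ∩ sphere (0 : E (m + 1)) 1) := by
  classical
  have hpne : p ≠ 0 := fun h => by rw [h, norm_zero] at hp; norm_num at hp
  set W : Submodule ℝ (E (m + 1)) := (ℝ ∙ p)ᗮ with hW
  have hdim : Module.finrank ℝ W = m := by
    have h1 : Module.finrank ℝ (ℝ ∙ p) = 1 := finrank_span_singleton hpne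
    have h2 := Submodule.finrank_add_finrank_orthogonal (K := (ℝ ∙ p))
    have h3 : Module.finrank ℝ (E (m + 1)) = m + 1 := by
      simp [finrank_euclideanSpace]
    rw [h1, h3, ← hW] at h2
    omega
  set n := Module.finrank ℝ W with hn
  set ψ : E n → E (m + 1) := fun x => ((stdOrthonormalBasis ℝ W).repr.symm x : E (m + 1)) with hψ
  have hψiso : Isometry ψ :=
    W.subtypeₗᵢ.isometry.comp (stdOrthonormalBasis ℝ W).repr.symm.isometry
  have hψW : ∀ x, ψ x ∈ W := fun x => ((stdOrthonormalBasis ℝ W).repr.symm x).2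
  have hψorth : ∀ x, ⟪p, ψ x⟫ = 0 := by
    intro x
    have := (Submodule.mem_orthogonal _ _).mp (hψW x)
    exact this p (Submodule.mem_span_singleton_self p)
  have hψnorm : ∀ x : E n, ‖ψ x‖ = ‖x‖ := by
    intro x
    have := hψiso.dist_eq x 0
    simpa [hψ, dist_eq_norm] using this
  set δ : ℝ := min ε 1 / 2 with hδdef
  have hδpos : 0 < δ := by positivity
  have hδε : 2 * δ ≤ ε := by
    rcases min_le_iff.mp (le_refl (min ε 1)) with _ | _ <;>
    · simp only [hδdef]
      have h1 : min ε 1 ≤ ε := min_le_left _ _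
      linarith
  have hδ1 : δ ≤ 1 / 2 := by
    have : min ε 1 ≤ 1 := min_le_right _ _
    simp only [hδdef]; linarith
  set π : E (m + 1) → E (m + 1) := fun x => x - ⟪p, x⟫ • p with hπ
  have hπlip : LipschitzWith 2 π := by
    apply LipschitzWith.of_dist_le_mul
    intro x y
    rw [dist_eq_norm, dist_eq_norm]
    have heq : π x - π y = (x - y) - ⟪p, x - y⟫ • p := by
      simp only [hπ, inner_sub_right]
      module
    rw [heq]
    have h1 : ‖(x - y) - ⟪p, x - y⟫ • p‖ ≤ ‖x - y‖ + ‖⟪p, x - y⟫ • p‖ := norm_sub_le _ _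
    have h2 : ‖⟪p, x - y⟫ • p‖ ≤ ‖x - y‖ := by
      rw [norm_smul, Real.norm_eq_abs, hp, mul_one]
      exact (abs_real_inner_le_norm _ _).trans (by rw [hp, one_mul])
    calc ‖(x - y) - ⟪p, x - y⟫ • p‖ ≤ ‖x - y‖ + ‖x - y‖ := by linarith
      _ = 2 * ‖x - y‖ := by ring
  -- the key inclusion
  have hincl : ψ '' (Metric.ball (0 : E n) δ) ⊆ π '' (Metric.ball p ε ∩ sphere (0 : E (m + 1)) 1) := by
    rintro - ⟨z, hz, rfl⟩
    rw [Metric.mem_ball, dist_zero_right] at hz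
    set y : E (m + 1) := ψ z with hy
    have hyW : ⟪p, y⟫ = 0 := hψorth z
    have hynorm : ‖y‖ < δ := by rw [hy, hψnorm]; exact hz
    have hy1 : ‖y‖ ≤ 1 / 2 := le_trans hynorm.le hδ1
    obtain ⟨t, ht⟩ : ∃ t : ℝ, ‖y‖ = t := ⟨_, rfl⟩
    have ht0 : 0 ≤ t := ht ▸ norm_nonneg y
    have ht1 : t ≤ 1 / 2 := ht ▸ hy1
    set s : ℝ := Real.sqrt (1 - t ^ 2) with hs
    have hs0 : 0 ≤ s := Real.sqrt_nonneg _
    have hs2 : s ^ 2 = 1 - t ^ 2 := Real.sq_sqrt (by nlinarith)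
    have hs_ge : 1 - t ^ 2 ≤ s := by nlinarith [sq_nonneg (s - (1 - t ^ 2)), sq_nonneg (s + (1 - t ^ 2))]
    set x : E (m + 1) := y + s • p with hx
    have hxs : ‖x‖ = 1 := by
      have h1 : ‖x‖ ^ 2 = 1 := by
        rw [hx, norm_add_sq_real]
        rw [real_inner_smul_right, real_inner_comm, hyW]
        rw [norm_smul, Real.norm_eq_abs, abs_of_nonneg hs0, hp, ht]
        nlinarith
      nlinarith [norm_nonneg x]
    have hxball : dist x p < ε := by
      rw [dist_eq_norm]
      have heq : x - p = y + (s - 1) • p := by rw [hx]; module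
      have h2 : ‖x - p‖ ^ 2 = ‖y‖ ^ 2 + (s - 1) ^ 2 := by
        rw [heq, norm_add_sq_real, real_inner_smul_right, real_inner_comm, hyW,
          norm_smul, Real.norm_eq_abs, hp]
        rw [mul_one, sq_abs, ht]
        ring
      rw [ht] at h2
      have hynorm' : t < δ := ht ▸ hynorm
      have h3 : (s - 1) ^ 2 ≤ t ^ 2 := by nlinarith
      have h4 : ‖x - p‖ ^ 2 ≤ 2 * t ^ 2 := by linarith
      have h5 : ‖x - p‖ ^ 2 < ε ^ 2 := by nlinarith
      nlinarith [norm_nonneg (x - p)]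
    refine ⟨x, ⟨Metric.mem_ball.mpr hxball, ?_⟩, ?_⟩
    · rw [mem_sphere_iff_norm, sub_zero]; exact hxs
    · -- π x = y
      have hpx : ⟪p, x⟫ = s := by
        rw [hx, inner_add_right, hyW, real_inner_smul_right, real_inner_self_eq_norm_sq, hp]
        ring
      rw [hπ]
      simp only
      rw [hpx, hx]
      module
  -- put it together
  have hb := hm_ball_pos n hδpos
  have h1 : μH[(n : ℝ)] (Metric.ball (0 : E n) δ) = μH[(n : ℝ)] (ψ '' Metric.ball (0 : E n) δ) :=
    (hψiso.hausdorffMeasure_image (Or.inl (by positivity)) _).symm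
  have h2 : μH[(n : ℝ)] (ψ '' Metric.ball (0 : E n) δ)
      ≤ μH[(n : ℝ)] (π '' (Metric.ball p ε ∩ sphere (0 : E (m + 1)) 1)) :=
    measure_mono hincl
  have h3 := hπlip.hausdorffMeasure_image_le (d := (n : ℝ)) (by positivity)
    (Metric.ball p ε ∩ sphere (0 : E (m + 1)) 1)
  have hfin : ((2 : ℝ≥0) : ℝ≥0∞) ^ (n : ℝ) ≠ ∞ := by
    refine ENNReal.rpow_ne_top_of_nonneg (by positivity) (by norm_num)
  have : 0 < μH[(n : ℝ)] (Metric.ball p ε ∩ sphere (0 : E (m + 1)) 1) := by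
    by_contra hcon
    push_neg at hcon
    have hzero : μH[(n : ℝ)] (Metric.ball p ε ∩ sphere (0 : E (m + 1)) 1) = 0 :=
      le_antisymm hcon (zero_le)
    rw [hzero, mul_zero] at h3
    have := lt_of_lt_of_le hb (h1.le.trans (h2.trans h3))
    exact lt_irrefl _ this
  rwa [hdim] at this


noncomputable def faceMap (m : ℕ) (i : Fin (m + 1)) (σ : ℝ) : E m → E (m + 1) :=
  fun y => (WithLp.equiv 2 (Fin (m + 1) → ℝ)).symm
    (i.insertNth σ ((WithLp.equiv 2 (Fin m → ℝ)) y))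

lemma faceMap_apply_same (m : ℕ) (i : Fin (m + 1)) (σ : ℝ) (y : E m) :
    faceMap m i σ y i = σ := by
  simp [faceMap, Fin.insertNth_apply_same]

lemma faceMap_apply_succAbove (m : ℕ) (i : Fin (m + 1)) (σ : ℝ) (y : E m) (j : Fin m) :
    faceMap m i σ y (i.succAbove j) = y j := by
  simp [faceMap, Fin.insertNth_apply_succAbove]

lemma face_isometry (m : ℕ) (i : Fin (m + 1)) (σ : ℝ) : Isometry (faceMap m i σ) := by
  apply Isometry.of_dist_eq
  intro y z
  rw [EuclideanSpace.dist_eq, EuclideanSpace.dist_eq]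
  congr 1
  rw [Fin.sum_univ_succAbove (fun j => dist (faceMap m i σ y j) (faceMap m i σ z j) ^ 2) i]
  simp [faceMap_apply_same, faceMap_apply_succAbove]


lemma face_fin (m : ℕ) (i : Fin (m + 1)) (σ : ℝ) :
    μH[(m : ℝ)] {x : E (m + 1) | x i = σ ∧ ∀ j, |x j| ≤ 1} ≠ ∞ := by
  have hsub : {x : E (m + 1) | x i = σ ∧ ∀ j, |x j| ≤ 1}
      ⊆ faceMap m i σ '' {y : E m | ∀ j, |y j| ≤ 1} := by
    rintro x ⟨hxi, hxb⟩
    refine ⟨(WithLp.equiv 2 (Fin m → ℝ)).symm (i.removeNth ((WithLp.equiv 2 (Fin (m+1) → ℝ)) x)),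
      fun j => ?_, ?_⟩
    · exact hxb _
    · simp only [faceMap, Equiv.apply_symm_apply]
      rw [← hxi]
      have hxe : (x i) = ((WithLp.equiv 2 (Fin (m+1) → ℝ)) x) i := rfl
      rw [hxe, Fin.insertNth_self_removeNth, Equiv.symm_apply_apply]
  have h1 : μH[(m : ℝ)] (faceMap m i σ '' {y : E m | ∀ j, |y j| ≤ 1})
      = μH[(m : ℝ)] {y : E m | ∀ j, |y j| ≤ 1} :=
    (face_isometry m i σ).hausdorffMeasure_image (Or.inl (by positivity)) _
  exact ne_top_of_le_ne_top (h1 ▸ hm_cube_fin m) (measure_mono hsub)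

lemma radial_lipschitz (d : ℕ) :
    LipschitzOnWith 2 (fun x : E d => ‖x‖⁻¹ • x) {x : E d | 1 ≤ ‖x‖} := by
  apply LipschitzOnWith.of_dist_le_mul
  intro x hx y hy
  simp only [Set.mem_setOf_eq] at hx hy
  have hxn : (0 : ℝ) < ‖x‖ := lt_of_lt_of_le one_pos hx
  have hyn : (0 : ℝ) < ‖y‖ := lt_of_lt_of_le one_pos hy
  rw [dist_eq_norm, dist_eq_norm]
  have heq : ‖x‖⁻¹ • x - ‖y‖⁻¹ • y = ‖x‖⁻¹ • (x - y) + (‖x‖⁻¹ - ‖y‖⁻¹) • y := by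
    module
  rw [heq]
  have h1 : ‖(‖x‖⁻¹ • (x - y))‖ ≤ ‖x - y‖ := by
    rw [norm_smul, Real.norm_eq_abs, abs_of_pos (by positivity)]
    exact mul_le_of_le_one_left (norm_nonneg _) (by rw [inv_le_one_iff₀]; right; exact hx)
  have h2 : ‖((‖x‖⁻¹ - ‖y‖⁻¹) • y)‖ ≤ ‖x - y‖ := by
    rw [norm_smul, Real.norm_eq_abs]
    have h3 : |‖x‖⁻¹ - ‖y‖⁻¹| = |‖y‖ - ‖x‖| / (‖x‖ * ‖y‖) := by
      rw [inv_sub_inv (ne_of_gt hxn) (ne_of_gt hyn), abs_div, abs_mul,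
        abs_of_pos hxn, abs_of_pos hyn]
    have h4 : |‖y‖ - ‖x‖| ≤ ‖x - y‖ := by
      rw [abs_sub_comm]
      exact abs_norm_sub_norm_le x y
    rw [h3]
    rw [div_mul_eq_mul_div, mul_comm ‖x‖ ‖y‖, mul_div_assoc]
    have h5 : ‖y‖ / (‖y‖ * ‖x‖) = ‖x‖⁻¹ := by field_simp
    rw [h5]
    calc |‖y‖ - ‖x‖| * ‖x‖⁻¹ ≤ |‖y‖ - ‖x‖| * 1 := by
          apply mul_le_mul_of_nonneg_left _ (abs_nonneg _)
          rw [inv_le_one_iff₀]; right; exact hx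
      _ ≤ ‖x - y‖ := by rw [mul_one]; exact h4
  calc ‖(‖x‖⁻¹ • (x - y)) + ((‖x‖⁻¹ - ‖y‖⁻¹) • y)‖
      ≤ ‖(‖x‖⁻¹ • (x - y))‖ + ‖((‖x‖⁻¹ - ‖y‖⁻¹) • y)‖ := norm_add_le _ _
    _ ≤ ‖x - y‖ + ‖x - y‖ := add_le_add h1 h2
    _ = 2 * ‖x - y‖ := by ring

lemma coord_le_norm {d : ℕ} (u : E d) (i : Fin d) : |u i| ≤ ‖u‖ := by
  have h1 : ‖u‖ = Real.sqrt (∑ j, u j ^ 2) := by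
    rw [EuclideanSpace.norm_eq]
    congr 1
    exact Finset.sum_congr rfl fun j _ => by rw [Real.norm_eq_abs, sq_abs]
  rw [h1]
  have h2 : |u i| = Real.sqrt (u i ^ 2) := (Real.sqrt_sq_eq_abs _).symm
  rw [h2]
  apply Real.sqrt_le_sqrt
  exact Finset.single_le_sum (fun j _ => sq_nonneg (u j)) (Finset.mem_univ i)

lemma sphere_fin (m : ℕ) : μH[(m : ℝ)] (sphere (0 : E (m + 1)) 1) ≠ ∞ := by
  classical
  set r : E (m + 1) → E (m + 1) := fun x => ‖x‖⁻¹ • x with hr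
  set F : Fin (m + 1) → ℝ → Set (E (m + 1)) :=
    fun i σ => {x : E (m + 1) | x i = σ ∧ ∀ j, |x j| ≤ 1} with hF
  set S : Set (E (m + 1)) := ⋃ i : Fin (m + 1), (F i 1 ∪ F i (-1)) with hS
  have hSA : S ⊆ {x : E (m + 1) | 1 ≤ ‖x‖} := by
    rintro x hx
    simp only [hS, Set.mem_iUnion, Set.mem_union] at hx
    obtain ⟨i, hx⟩ := hx
    have h1 : |x i| = 1 := by
      rcases hx with ⟨h, _⟩ | ⟨h, _⟩ <;> rw [h] <;> norm_num
    exact le_trans h1.symm.le (coord_le_norm x i)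
  have hcov : sphere (0 : E (m + 1)) 1 ⊆ r '' S := by
    intro u hu
    rw [mem_sphere_zero_iff_norm] at hu
    obtain ⟨i, -, hmax⟩ := Finset.exists_max_image Finset.univ (fun j => |u j|) ⟨0, Finset.mem_univ 0⟩
    set a : ℝ := |u i| with ha
    have hapos : 0 < a := by
      rcases lt_or_eq_of_le (abs_nonneg (u i)) with h | h
      · exact h
      · exfalso
        have hznorm : ‖u‖ = 0 := by
          rw [EuclideanSpace.norm_eq]
          have hcoord : ∀ j, ‖u j‖ = (0 : ℝ) := by
            intro j
            have hj : |u j| ≤ 0 := by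
              rw [h]; exact hmax j (Finset.mem_univ j)
            have h2 := abs_nonneg (u j)
            rw [Real.norm_eq_abs]
            linarith
          have : ∀ j ∈ Finset.univ, ‖u j‖ ^ 2 = (0 : ℝ) := fun j _ => by rw [hcoord j]; ring
          rw [Finset.sum_congr rfl this]
          simp
        rw [hu] at hznorm
        norm_num at hznorm
    set x : E (m + 1) := a⁻¹ • u with hx
    have hxj : ∀ j, x j = a⁻¹ * u j := fun j => rfl
    have hxb : ∀ j, |x j| ≤ 1 := by
      intro j
      rw [hxj, abs_mul, abs_of_pos (by positivity)]
      rw [inv_mul_le_iff₀ hapos, mul_one]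
      exact hmax j (Finset.mem_univ j)
    have hxi : |x i| = 1 := by
      rw [hxj, abs_mul, abs_of_pos (by positivity), ← ha]
      field_simp
    have hxnorm : ‖x‖ = a⁻¹ := by
      rw [hx, norm_smul, Real.norm_eq_abs, abs_of_pos (by positivity), hu, mul_one]
    have hrx : r x = u := by
      rw [hr]
      simp only
      rw [hxnorm, inv_inv, hx, smul_smul, mul_inv_cancel₀ (ne_of_gt hapos), one_smul]
    refine ⟨x, ?_, hrx⟩
    simp only [hS, Set.mem_iUnion, Set.mem_union]
    rcases abs_eq (by norm_num : (0:ℝ) ≤ 1) |>.mp hxi with h | h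
    · exact ⟨i, Or.inl ⟨h, hxb⟩⟩
    · exact ⟨i, Or.inr ⟨h, hxb⟩⟩
  have hlip : LipschitzOnWith 2 r S := (radial_lipschitz (m + 1)).mono hSA
  have h1 : μH[(m : ℝ)] (r '' S) ≤ (2 : ℝ≥0∞) ^ (m : ℝ) * μH[(m : ℝ)] S := by
    have := hlip.hausdorffMeasure_image_le (d := (m : ℝ)) (by positivity)
    simpa using this
  have hSfin : μH[(m : ℝ)] S ≠ ∞ := by
    have h2 : μH[(m : ℝ)] S ≤ ∑' i : Fin (m + 1), μH[(m : ℝ)] (F i 1 ∪ F i (-1)) :=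
      measure_iUnion_le _
    rw [tsum_fintype] at h2
    refine ne_top_of_le_ne_top ?_ h2
    refine (ENNReal.sum_lt_top.mpr fun i _ => ?_).ne
    refine lt_of_le_of_lt (measure_union_le _ _) (ENNReal.add_lt_top.mpr ⟨?_, ?_⟩)
    · exact (face_fin m i 1).lt_top
    · exact (face_fin m i (-1)).lt_top
  refine ne_top_of_le_ne_top ?_ ((measure_mono hcov).trans h1)
  exact ENNReal.mul_ne_top (ENNReal.rpow_ne_top_of_nonneg (by positivity) (by norm_num)) hSfin

lemma G_bound {d n : ℕ} (w : Fin (n + 1) → E d) (hw : ∀ j, ‖w j‖ ≤ 1) (u : E d) :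
    |⨆ j, ⟪u, w j⟫| ≤ ‖u‖ := by
  have hbdd : BddAbove (Set.range fun j => ⟪u, w j⟫) := Set.Finite.bddAbove (Set.finite_range _)
  rw [abs_le]
  constructor
  · refine le_trans ?_ (le_ciSup (f := fun j => ⟪u, w j⟫) hbdd 0)
    have h1 := abs_real_inner_le_norm u (w 0)
    have h2 : ‖u‖ * ‖w 0‖ ≤ ‖u‖ * 1 := mul_le_mul_of_nonneg_left (hw 0) (norm_nonneg u)
    rw [abs_le] at h1
    linarith
  · refine ciSup_le fun j => ?_
    have h1 := real_inner_le_norm u (w j)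
    have h2 : ‖u‖ * ‖w j‖ ≤ ‖u‖ * 1 := mul_le_mul_of_nonneg_left (hw j) (norm_nonneg u)
    linarith

lemma G_shift {d n : ℕ} (w : Fin (n + 1) → E d) (hw : ∀ j, ‖w j‖ ≤ 1) (u u' : E d) :
    (⨆ j, ⟪u, w j⟫) ≤ (⨆ j, ⟪u', w j⟫) + ‖u - u'‖ := by
  have hbdd : BddAbove (Set.range fun j => ⟪u', w j⟫) := Set.Finite.bddAbove (Set.finite_range _)
  refine ciSup_le fun j => ?_
  have h1 : ⟪u, w j⟫ = ⟪u', w j⟫ + ⟪u - u', w j⟫ := by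
    rw [inner_sub_left]; ring
  have h2 : |⟪u - u', w j⟫| ≤ ‖u - u'‖ := by
    have h3 := abs_real_inner_le_norm (u - u') (w j)
    have h4 : ‖u - u'‖ * ‖w j‖ ≤ ‖u - u'‖ * 1 := mul_le_mul_of_nonneg_left (hw j) (norm_nonneg _)
    linarith
  have h4 : ⟪u', w j⟫ ≤ ⨆ j, ⟪u', w j⟫ := le_ciSup (f := fun j => ⟪u', w j⟫) hbdd j
  rw [abs_le] at h2
  linarith

lemma G_lipschitz {d n : ℕ} (w : Fin (n + 1) → E d) (hw : ∀ j, ‖w j‖ ≤ 1) :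
    LipschitzWith 1 (fun u : E d => ⨆ j, ⟪u, w j⟫) := by
  apply LipschitzWith.of_dist_le_mul
  intro u u'
  rw [Real.dist_eq, NNReal.coe_one, one_mul, dist_eq_norm, abs_le]
  constructor
  · have h := G_shift w hw u' u
    rw [norm_sub_rev] at h
    linarith
  · have h := G_shift w hw u u'
    linarith

/-- If a simplex contained in the closed unit ball maximizes the mean width among all
simplices contained in the closed unit ball, then all its vertices lie on the unit sphere. -/
theorem simplex_meanWidth_max_vertices_on_sphere {d : ℕ} (hd : 1 ≤ d)
    (v : Fin (d + 1) → EuclideanSpace ℝ (Fin d))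
    (hsub : convexHull ℝ (Set.range v) ⊆ closedBall (0 : EuclideanSpace ℝ (Fin d)) 1)
    (hmax : ∀ w : Fin (d + 1) → EuclideanSpace ℝ (Fin d),
      convexHull ℝ (Set.range w) ⊆ closedBall (0 : EuclideanSpace ℝ (Fin d)) 1 →
      meanWidth (convexHull ℝ (Set.range w)) ≤ meanWidth (convexHull ℝ (Set.range v))) :
    ∀ i, ‖v i‖ = 1 := by
  classical
  obtain ⟨m, rfl⟩ : ∃ m, d = m + 1 := ⟨d - 1, by omega⟩
  intro i
  by_contra hne
  have hv : ∀ j, ‖v j‖ ≤ 1 := fun j => by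
    have h := hsub (subset_convexHull ℝ _ (Set.mem_range_self j))
    rwa [mem_closedBall_zero_iff] at h
  have hlt : ‖v i‖ < 1 := lt_of_le_of_ne (hv i) hne
  obtain ⟨p, hp1, hp2, hp3⟩ := exists_good_p (by omega : 1 ≤ m + 1) v hv hlt
  set w : Fin (m + 1 + 1) → E (m + 1) := Function.update v i p with hwdef
  have hwi : w i = p := Function.update_self i p v
  have hwj : ∀ j, j ≠ i → w j = v j := fun j hj => Function.update_of_ne hj p v
  have hw : ∀ j, ‖w j‖ ≤ 1 := by
    intro j
    by_cases hji : j = i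
    · rw [hji, hwi, hp1]
    · rw [hwj j hji]; exact hv j
  have hwsub : convexHull ℝ (Set.range w) ⊆ closedBall (0 : E (m + 1)) 1 := by
    apply convexHull_min _ (convex_closedBall _ _)
    rintro - ⟨j, rfl⟩
    exact mem_closedBall_zero_iff.mpr (hw j)
  have hvj_mem : ∀ j, v j ∈ convexHull ℝ (Set.range w) := by
    intro j
    by_cases hji : j = i
    · subst hji
      have hsub' : insert p (v '' {j' | j' ≠ j}) ⊆ Set.range w := by
        intro x hx
        rcases Set.mem_insert_iff.mp hx with rfl | hx'
        · exact ⟨j, hwi⟩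
        · obtain ⟨j', hj', rfl⟩ := hx'
          exact ⟨j', hwj j' hj'⟩
      exact convexHull_mono hsub' hp3
    · exact subset_convexHull ℝ _ ⟨j, hwj j hji⟩
  set Gv : E (m + 1) → ℝ := fun u => ⨆ j, ⟪u, v j⟫ with hGvdef
  set Gw : E (m + 1) → ℝ := fun u => ⨆ j, ⟪u, w j⟫ with hGwdef
  have hGle : ∀ u, Gv u ≤ Gw u := fun u => ciSup_le fun j => inner_le_G w u (hvj_mem j)
  -- the measure
  have hexp : ((m + 1 : ℕ) : ℝ) - 1 = (m : ℝ) := by push_cast; ring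
  set ν : Measure (E (m + 1)) :=
    (μH[((m + 1 : ℕ) : ℝ) - 1]).restrict (sphere (0 : E (m + 1)) 1) with hν
  have hmeas_eq : (μH[((m + 1 : ℕ) : ℝ) - 1] : Measure (E (m + 1))) = μH[(m : ℝ)] := by
    rw [hexp]
  have hν_univ : ν Set.univ = μH[(m : ℝ)] (sphere (0 : E (m + 1)) 1) := by
    rw [hν, hmeas_eq, Measure.restrict_apply MeasurableSet.univ, Set.univ_inter]
  have hνfin : ν Set.univ ≠ ⊤ := by rw [hν_univ]; exact sphere_fin m
  have hνpos : ν Set.univ ≠ 0 := by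
    rw [hν_univ]
    have h1 : ‖(EuclideanSpace.single (0 : Fin (m + 1)) (1 : ℝ) : E (m + 1))‖ = 1 := by simp
    have h2 := cap_pos h1 (by norm_num : (0 : ℝ) < 1)
    intro hcon
    have h3 : μH[(m : ℝ)] (Metric.ball (EuclideanSpace.single (0 : Fin (m + 1)) (1 : ℝ)) 1
        ∩ sphere (0 : E (m + 1)) 1) ≤ 0 := by
      rw [← hcon]; exact measure_mono Set.inter_subset_right
    exact absurd (lt_of_lt_of_le h2 h3) (lt_irrefl 0)
  have hIsFin : IsFiniteMeasure ν := ⟨lt_top_iff_ne_top.mpr hνfin⟩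
  set c : ℝ≥0∞ := (ν Set.univ)⁻¹ with hc
  have hc_pos : 0 < c.toReal := by
    rw [hc]
    exact ENNReal.toReal_pos (ENNReal.inv_ne_zero.mpr hνfin) (ENNReal.inv_ne_top.mpr hνpos)
  have hsp : sphereProb (m + 1) = c • ν := rfl
  -- integrability
  have hae_sphere : ∀ᵐ u ∂ν, u ∈ sphere (0 : E (m + 1)) 1 := by
    rw [hν]
    exact ae_restrict_mem isClosed_sphere.measurableSet
  have hintv : Integrable Gv ν := by
    refine Integrable.mono' (integrable_const 1)
      ((G_lipschitz v hv).continuous.aestronglyMeasurable) ?_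
    filter_upwards [hae_sphere] with u hu
    rw [mem_sphere_zero_iff_norm] at hu
    rw [Real.norm_eq_abs]
    calc |Gv u| ≤ ‖u‖ := G_bound v hv u
      _ = 1 := hu
  have hintw : Integrable Gw ν := by
    refine Integrable.mono' (integrable_const 1)
      ((G_lipschitz w hw).continuous.aestronglyMeasurable) ?_
    filter_upwards [hae_sphere] with u hu
    rw [mem_sphere_zero_iff_norm] at hu
    rw [Real.norm_eq_abs]
    calc |Gw u| ≤ ‖u‖ := G_bound w hw u
      _ = 1 := hu
  -- from maximality
  have hmw := hmax w hwsub
  have hint_le : ∫ u, Gw u ∂ν ≤ ∫ u, Gv u ∂ν := by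
    have h1 : meanWidth (convexHull ℝ (Set.range w)) = 2 * (c.toReal * ∫ u, Gw u ∂ν) := by
      rw [meanWidth, hsp, integral_smul_measure, smul_eq_mul]
      congr 2
      exact integral_congr_ae (Filter.Eventually.of_forall fun u => suppFn_hull w u)
    have h2 : meanWidth (convexHull ℝ (Set.range v)) = 2 * (c.toReal * ∫ u, Gv u ∂ν) := by
      rw [meanWidth, hsp, integral_smul_measure, smul_eq_mul]
      congr 2
      exact integral_congr_ae (Filter.Eventually.of_forall fun u => suppFn_hull v u)
    rw [h1, h2] at hmw
    by_contra hcon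
    push_neg at hcon
    nlinarith
  -- strictness
  have hGvp : Gv p < 1 := by
    obtain ⟨j0, hj0⟩ := Finite.exists_max (fun j => ⟪p, v j⟫)
    exact lt_of_le_of_lt (ciSup_le fun j => hj0 j) (hp2 j0)
  set η : ℝ := 1 - Gv p with hη
  have hηpos : 0 < η := by rw [hη]; linarith
  have hball_lb : ∀ u ∈ Metric.ball p (η / 4), η / 2 ≤ Gw u - Gv u := by
    intro u hu
    rw [Metric.mem_ball, dist_eq_norm] at hu
    have h2 : ⟪u, p⟫ ≤ Gw u := by
      have h := le_ciSup (f := fun j => ⟪u, w j⟫) (Set.Finite.bddAbove (Set.finite_range _)) i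
      rwa [hwi] at h
    have h3 : ⟪u, p⟫ = ⟪p, p⟫ + ⟪u - p, p⟫ := by rw [inner_sub_left]; ring
    have h4 : |⟪u - p, p⟫| ≤ ‖u - p‖ := by
      have h := abs_real_inner_le_norm (u - p) p
      rwa [hp1, mul_one] at h
    have h5 : ⟪p, p⟫ = 1 := by
      rw [real_inner_self_eq_norm_mul_norm, hp1]; norm_num
    have h6 : Gv u ≤ Gv p + ‖u - p‖ := G_shift v hv u p
    have h7 : Gv p = 1 - η := by rw [hη]; ring
    rw [abs_le] at h4
    linarith
  have hB_pos : 0 < ν (Metric.ball p (η / 4)) := by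
    have h := cap_pos hp1 (show (0 : ℝ) < η / 4 by linarith)
    rw [hν, Measure.restrict_apply measurableSet_ball, hmeas_eq]
    exact h
  have hB_fin : ν (Metric.ball p (η / 4)) ≠ ⊤ := measure_ne_top ν _
  have hdiff_int : Integrable (fun u => Gw u - Gv u) ν := hintw.sub hintv
  have hdiff_nonneg : 0 ≤ᵐ[ν] fun u => Gw u - Gv u :=
    Filter.Eventually.of_forall fun u => sub_nonneg.mpr (hGle u)
  have hset_int : (η / 2) * (ν (Metric.ball p (η / 4))).toReal
      ≤ ∫ u in Metric.ball p (η / 4), (Gw u - Gv u) ∂ν :=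
    setIntegral_ge_of_const_le_real measurableSet_ball hB_fin hball_lb hdiff_int.integrableOn
  have hint_pos : 0 < ∫ u, (Gw u - Gv u) ∂ν := by
    have h1 : ∫ u in Metric.ball p (η / 4), (Gw u - Gv u) ∂ν ≤ ∫ u, (Gw u - Gv u) ∂ν :=
      setIntegral_le_integral hdiff_int hdiff_nonneg
    have h2 : 0 < (η / 2) * (ν (Metric.ball p (η / 4))).toReal := by
      apply mul_pos (by linarith)
      exact ENNReal.toReal_pos (ne_of_gt hB_pos) hB_fin
    linarith
  rw [integral_sub hintw hintv] at hint_pos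
  linarith
end

section
/- If a simplex \(\triangle = \mathrm{conv}(v_0,\dots,v_d)\) contained in \(B_2^d\) maximizes the mean width among all simplices contained in \(B_2^d\), then the closed hemispheres centered at the vertices \(v_i\) cover the sphere \(\mathbb{S}^{d-1}\); i.e., for every \(v \in \mathbb{S}^{d-1}\) there exists \(i\) with \(v \cdot v_i \ge 0\). -/
open MeasureTheory Metric Set
open scoped RealInnerProductSpace

open MeasureTheory.Measure
open scoped NNReal ENNReal

variable {n : ℕ}

noncomputable def capMap (n : ℕ) (σ : ℝ) (y : EuclideanSpace ℝ (Fin n)) :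
    EuclideanSpace ℝ (Fin (n+1)) :=
  WithLp.toLp 2 (Fin.snoc y.ofLp (σ * Real.sqrt (1 - ‖y‖^2)))

noncomputable def capDom (n : ℕ) : Set (EuclideanSpace ℝ (Fin n)) :=
  {y | ‖y‖^2 ≤ 1 - 1/(n+1)}

lemma norm_sq_eq (x : EuclideanSpace ℝ (Fin n)) : ‖x‖^2 = ∑ i, (x i)^2 := by
  rw [EuclideanSpace.norm_eq]
  rw [Real.sq_sqrt (by positivity)]
  simp [sq]

lemma dist_sq_eq (x y : EuclideanSpace ℝ (Fin n)) : (dist x y)^2 = ∑ i, (x i - y i)^2 := by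
  rw [EuclideanSpace.dist_eq, Real.sq_sqrt (by positivity)]
  exact Finset.sum_congr rfl fun i _ => by rw [Real.dist_eq, sq_abs]

set_option maxHeartbeats 1000000 in
lemma capMap_lipschitz (σ : ℝ) (hσ : σ = 1 ∨ σ = -1) :
    LipschitzOnWith ((n:ℝ≥0)+2) (capMap n σ) (capDom n) := by
  rw [lipschitzOnWith_iff_dist_le_mul]
  intro y hy z hz
  have hσ1 : σ^2 = 1 := by rcases hσ with h | h <;> simp [h]
  have hδ : (0:ℝ) < 1/(n+1) := by positivity
  set δ : ℝ := Real.sqrt (1/(n+1)) with hδdef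
  have hδpos : 0 < δ := Real.sqrt_pos.2 hδ
  have hδsq : δ^2 = 1/(n+1) := Real.sq_sqrt hδ.le
  have hy1 : ‖y‖^2 ≤ 1 - 1/(n+1) := hy
  have hz1 : ‖z‖^2 ≤ 1 - 1/(n+1) := hz
  have hay : δ ≤ Real.sqrt (1 - ‖y‖^2) := by apply Real.sqrt_le_sqrt; linarith
  have haz : δ ≤ Real.sqrt (1 - ‖z‖^2) := by apply Real.sqrt_le_sqrt; linarith
  have hyn : ‖y‖ ≤ 1 := by nlinarith [norm_nonneg y]
  have hzn : ‖z‖ ≤ 1 := by nlinarith [norm_nonneg z]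
  have h1 : Real.sqrt (1 - ‖y‖^2) ≥ 0 := Real.sqrt_nonneg _
  have h2 : Real.sqrt (1 - ‖z‖^2) ≥ 0 := Real.sqrt_nonneg _
  have hsq1 : (Real.sqrt (1 - ‖y‖^2))^2 = 1 - ‖y‖^2 := Real.sq_sqrt (by nlinarith)
  have hsq2 : (Real.sqrt (1 - ‖z‖^2))^2 = 1 - ‖z‖^2 := Real.sq_sqrt (by nlinarith)
  have key : |Real.sqrt (1 - ‖y‖^2) - Real.sqrt (1 - ‖z‖^2)| ≤ δ⁻¹ * dist y z := by
    have hd : |‖y‖^2 - ‖z‖^2| ≤ 2 * dist y z := by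
      have h3 : |‖y‖ - ‖z‖| ≤ dist y z := abs_norm_sub_norm_le y z
      have he : |‖y‖^2 - ‖z‖^2| = |‖y‖ - ‖z‖| * (‖y‖ + ‖z‖) := by
        rw [← abs_of_nonneg (by positivity : (0:ℝ) ≤ ‖y‖ + ‖z‖), ← abs_mul]
        ring_nf
      rw [he]
      calc |‖y‖ - ‖z‖| * (‖y‖ + ‖z‖) ≤ dist y z * 2 :=
            mul_le_mul h3 (by linarith) (by positivity) dist_nonneg
        _ = 2 * dist y z := by ring
    have habs : |Real.sqrt (1 - ‖y‖^2) - Real.sqrt (1 - ‖z‖^2)| *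
        (Real.sqrt (1 - ‖y‖^2) + Real.sqrt (1 - ‖z‖^2)) = |‖y‖^2 - ‖z‖^2| := by
      rw [← abs_of_nonneg (by positivity : (0:ℝ) ≤ Real.sqrt (1 - ‖y‖^2) + Real.sqrt (1 - ‖z‖^2)),
        ← abs_mul, show (Real.sqrt (1 - ‖y‖^2) - Real.sqrt (1 - ‖z‖^2)) *
          (Real.sqrt (1 - ‖y‖^2) + Real.sqrt (1 - ‖z‖^2)) = ‖z‖^2 - ‖y‖^2 by nlinarith,
        abs_sub_comm]
    have hsum2 : 2*δ ≤ Real.sqrt (1 - ‖y‖^2) + Real.sqrt (1 - ‖z‖^2) := by linarith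
    have h6 : |Real.sqrt (1 - ‖y‖^2) - Real.sqrt (1 - ‖z‖^2)| * (2*δ) ≤ 2 * dist y z := by
      nlinarith [abs_nonneg (Real.sqrt (1 - ‖y‖^2) - Real.sqrt (1 - ‖z‖^2))]
    rw [show δ⁻¹ * dist y z = dist y z / δ by ring, le_div_iff₀ hδpos]
    linarith
  -- now the distance computation
  have hdist2 : (dist (capMap n σ y) (capMap n σ z))^2 =
      (dist y z)^2 + σ^2 * (Real.sqrt (1 - ‖y‖^2) - Real.sqrt (1 - ‖z‖^2))^2 := by
    rw [dist_sq_eq, Fin.sum_univ_castSucc]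
    simp only [capMap, Fin.snoc_castSucc, Fin.snoc_last]
    rw [← dist_sq_eq y z]
    ring
  have hC : (0:ℝ) ≤ (n:ℝ)+2 := by positivity
  have hfinal : (dist (capMap n σ y) (capMap n σ z))^2 ≤ (((n:ℝ)+2) * dist y z)^2 := by
    rw [hdist2, hσ1, one_mul]
    have h5 : (Real.sqrt (1 - ‖y‖^2) - Real.sqrt (1 - ‖z‖^2))^2 ≤ (δ⁻¹ * dist y z)^2 := by
      rw [← sq_abs]
      exact pow_le_pow_left₀ (abs_nonneg _) key 2
    have hδinv : (δ⁻¹)^2 = (n:ℝ)+1 := by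
      rw [inv_pow, hδsq]; field_simp
    have h5' : (Real.sqrt (1 - ‖y‖^2) - Real.sqrt (1 - ‖z‖^2))^2
        ≤ ((n:ℝ)+1) * (dist y z)^2 := by
      rw [mul_pow, hδinv] at h5; linarith
    have h8 : ((n:ℝ)+2)*(dist y z)^2 ≤ ((n:ℝ)+2)^2*(dist y z)^2 := by
      have : ((n:ℝ)+2) ≤ ((n:ℝ)+2)^2 := by nlinarith [Nat.cast_nonneg (α := ℝ) n]
      exact mul_le_mul_of_nonneg_right this (sq_nonneg _)
    calc (dist y z)^2 + (Real.sqrt (1 - ‖y‖^2) - Real.sqrt (1 - ‖z‖^2))^2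
        ≤ ((n:ℝ)+2) * (dist y z)^2 := by linarith
      _ ≤ ((n:ℝ)+2)^2 * (dist y z)^2 := h8
      _ = (((n:ℝ)+2) * dist y z)^2 := by ring
  have hle : dist (capMap n σ y) (capMap n σ z) ≤ ((n:ℝ)+2) * dist y z := by
    have h7 : (0:ℝ) ≤ ((n:ℝ)+2) * dist y z := by positivity
    have h9 := dist_nonneg (x := capMap n σ y) (y := capMap n σ z)
    set D1 := dist (capMap n σ y) (capMap n σ z) with hD1
    clear_value D1
    clear hdist2
    nlinarith
  refine hle.trans_eq ?_
  push_cast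
  ring

noncomputable def permE (i : Fin (n+1)) :
    EuclideanSpace ℝ (Fin (n+1)) ≃ₗᵢ[ℝ] EuclideanSpace ℝ (Fin (n+1)) :=
  LinearIsometryEquiv.piLpCongrLeft 2 ℝ ℝ (Equiv.swap i (Fin.last n))

lemma sphere_subset_caps :
    sphere (0 : EuclideanSpace ℝ (Fin (n+1))) 1 ⊆
      ⋃ (i : Fin (n+1)) (b : Bool),
        (permE i) '' (capMap n (if b then 1 else -1) '' capDom n) := by
  intro x hx
  have hx1 : ‖x‖ = 1 := by simpa using hx
  have hex : ∃ i : Fin (n+1), 1/((n:ℝ)+1) ≤ (x i)^2 := by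
    by_contra hc
    push_neg at hc
    have hsum : ∑ i, (x i)^2 < ∑ _i : Fin (n+1), 1/((n:ℝ)+1) :=
      Finset.sum_lt_sum_of_nonempty Finset.univ_nonempty fun i _ => hc i
    rw [← norm_sq_eq, hx1] at hsum
    simp only [Finset.sum_const, Finset.card_univ, Fintype.card_fin, nsmul_eq_mul] at hsum
    rw [mul_one_div] at hsum
    have h1 : ((n+1:ℕ):ℝ) / ((n:ℝ)+1) = 1 := by
      push_cast; rw [div_self]; positivity
    rw [h1] at hsum
    norm_num at hsum
  obtain ⟨i, hi⟩ := hex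
  set x' : EuclideanSpace ℝ (Fin (n+1)) := (permE i).symm x with hx'def
  have hx'norm : ‖x'‖ = 1 := by rw [hx'def, (permE i).symm.norm_map, hx1]
  have hx'last : x' (Fin.last n) = x i := by
    simp only [hx'def, permE, LinearIsometryEquiv.piLpCongrLeft_symm,
      LinearIsometryEquiv.piLpCongrLeft_apply]
    simp only [Equiv.piCongrLeft']
    exact congrArg x (Equiv.swap_apply_right i (Fin.last n))
  set y : EuclideanSpace ℝ (Fin n) := WithLp.toLp 2 (Fin.init x'.ofLp) with hydef
  have hynorm : ‖y‖^2 = 1 - (x i)^2 := by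
    have h := norm_sq_eq x'
    rw [Fin.sum_univ_castSucc, hx'last] at h
    have hyy : ∑ j, (y j)^2 = ∑ j : Fin n, (x' j.castSucc)^2 := rfl
    rw [norm_sq_eq, hyy]
    rw [hx'norm] at h
    nlinarith
  have hy1 : y ∈ capDom n := by
    simp only [capDom, mem_setOf_eq, hynorm]
    have : (1:ℝ)/((n:ℝ)+1) = 1/(((n:ℕ):ℝ)+1) := by norm_num
    push_cast
    linarith
  set b : Bool := decide (0 ≤ x i) with hbdef
  refine mem_iUnion.2 ⟨i, mem_iUnion.2 ⟨b, ⟨capMap n (if b then 1 else -1) y, ⟨y, hy1, rfl⟩, ?_⟩⟩⟩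
  have hsqrt : Real.sqrt (1 - ‖y‖^2) = |x i| := by
    rw [hynorm]
    simp [Real.sqrt_sq_eq_abs]
  have hcap : capMap n (if b then 1 else -1) y = x' := by
    rw [capMap, hsqrt]
    have hlast : (if b then (1:ℝ) else -1) * |x i| = x i := by
      by_cases h : 0 ≤ x i
      · simp [hbdef, h, abs_of_nonneg h]
      · push_neg at h
        simp [hbdef, not_le.2 h, abs_of_neg h]
    rw [hlast, ← hx'last, hydef, Fin.snoc_init_self]
  rw [hcap, hx'def]
  exact (permE i).apply_symm_apply x

instance haarF : (μH[(n : ℝ)] : Measure (EuclideanSpace ℝ (Fin n))).IsAddHaarMeasure := by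
  have h : ((Module.finrank ℝ (EuclideanSpace ℝ (Fin n)) : ℕ) : ℝ) = (n:ℝ) := by simp
  exact h ▸ isAddHaarMeasure_hausdorffMeasure

lemma capDom_subset : capDom n ⊆ closedBall (0 : EuclideanSpace ℝ (Fin n)) 1 := by
  intro y hy
  have h : ‖y‖^2 ≤ 1 - 1/((n:ℝ)+1) := by
    have := hy
    simpa [capDom] using this
  have h2 : (0:ℝ) < 1/((n:ℝ)+1) := by positivity
  simp only [mem_closedBall, dist_zero_right]
  nlinarith [norm_nonneg y]

lemma measure_sphere_lt_top :
    μH[(n : ℝ)] (sphere (0 : EuclideanSpace ℝ (Fin (n+1))) 1) < ⊤ := by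
  have hcap : ∀ b : Bool, μH[(n : ℝ)] (capMap n (if b then 1 else -1) '' capDom n) < ⊤ := by
    intro b
    have hlip := capMap_lipschitz (n := n) (if b then (1:ℝ) else -1)
      (by cases b <;> simp)
    calc μH[(n : ℝ)] (capMap n (if b then 1 else -1) '' capDom n)
        ≤ ((((n:ℝ≥0)+2) : ℝ≥0∞)) ^ (n:ℝ) * μH[(n : ℝ)] (capDom n) :=
          hlip.hausdorffMeasure_image_le (Nat.cast_nonneg n)
      _ ≤ ((((n:ℝ≥0)+2) : ℝ≥0∞)) ^ (n:ℝ) *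
            μH[(n : ℝ)] (closedBall (0 : EuclideanSpace ℝ (Fin n)) 1) := by
          gcongr
          exact capDom_subset
      _ < ⊤ := by
          apply ENNReal.mul_lt_top
          · exact ENNReal.rpow_lt_top_of_nonneg (Nat.cast_nonneg n) (by simp)
          · exact (isCompact_closedBall _ _).measure_lt_top
  calc μH[(n : ℝ)] (sphere (0 : EuclideanSpace ℝ (Fin (n+1))) 1)
      ≤ μH[(n : ℝ)] (⋃ (i : Fin (n+1)) (b : Bool),
          (permE i) '' (capMap n (if b then 1 else -1) '' capDom n)) :=
        measure_mono sphere_subset_caps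
    _ ≤ ∑' (i : Fin (n+1)), ∑' (b : Bool),
          μH[(n : ℝ)] ((permE i) '' (capMap n (if b then 1 else -1) '' capDom n)) :=
        (measure_iUnion_le _).trans (ENNReal.tsum_le_tsum fun i => measure_iUnion_le _)
    _ < ⊤ := by
        rw [tsum_fintype]
        refine ENNReal.sum_lt_top.2 fun i _ => ?_
        rw [tsum_fintype]
        refine ENNReal.sum_lt_top.2 fun b _ => ?_
        rw [(permE i).isometry.hausdorffMeasure_image (Or.inl (Nat.cast_nonneg n))]
        exact hcap b

def projE (n : ℕ) (x : EuclideanSpace ℝ (Fin (n+1))) : EuclideanSpace ℝ (Fin n) :=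
  WithLp.toLp 2 (Fin.init x.ofLp)

lemma proj_lipschitz : LipschitzWith 1 (projE n) := by
  apply LipschitzWith.of_dist_le_mul
  intro x y
  rw [NNReal.coe_one, one_mul]
  have h1 : (0:ℝ) ≤ dist x y := dist_nonneg
  have h2 : (dist (projE n x) (projE n y))^2 ≤ (dist x y)^2 := by
    rw [dist_sq_eq x y, Fin.sum_univ_castSucc, dist_sq_eq (projE n x) (projE n y)]
    have heq : ∑ j : Fin n, ((projE n x) j - (projE n y) j)^2
        = ∑ j : Fin n, (x j.castSucc - y j.castSucc)^2 := rfl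
    rw [heq]
    nlinarith [sq_nonneg (x (Fin.last n) - y (Fin.last n))]
  nlinarith [dist_nonneg (x := projE n x) (y := projE n y)]

lemma measure_sphere_pos :
    0 < μH[(n : ℝ)] (sphere (0 : EuclideanSpace ℝ (Fin (n+1))) 1) := by
  have hsub : ball (0 : EuclideanSpace ℝ (Fin n)) 1 ⊆
      projE n '' sphere (0 : EuclideanSpace ℝ (Fin (n+1))) 1 := by
    intro y hy
    have hy1 : ‖y‖ < 1 := by simpa using hy
    refine ⟨capMap n 1 y, ?_, ?_⟩
    · have hnorm : ‖capMap n 1 y‖^2 = 1 := by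
        rw [norm_sq_eq, Fin.sum_univ_castSucc]
        simp only [capMap, Fin.snoc_castSucc, Fin.snoc_last]
        rw [← norm_sq_eq y, one_mul, Real.sq_sqrt (by nlinarith [norm_nonneg y])]
        ring
      simp only [mem_sphere_iff_norm, sub_zero]
      nlinarith [norm_nonneg (capMap n 1 y)]
    · ext j
      simp [projE, capMap, Fin.init_snoc]
  have h0 : (0:ℝ≥0∞) < μH[(n : ℝ)] (ball (0 : EuclideanSpace ℝ (Fin n)) 1) :=
    measure_ball_pos _ _ one_pos
  calc (0:ℝ≥0∞)
      < μH[(n : ℝ)] (ball (0 : EuclideanSpace ℝ (Fin n)) 1) := h0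
    _ ≤ μH[(n : ℝ)] (projE n '' sphere 0 1) := measure_mono hsub
    _ ≤ ((1:ℝ≥0) : ℝ≥0∞) ^ (n:ℝ) * μH[(n : ℝ)] (sphere (0 : EuclideanSpace ℝ (Fin (n+1))) 1) :=
        proj_lipschitz.hausdorffMeasure_image_le (Nat.cast_nonneg n) _
    _ = μH[(n : ℝ)] (sphere (0 : EuclideanSpace ℝ (Fin (n+1))) 1) := by simp


section MeasureFacts
variable {n : ℕ}

lemma sphereProb_eq (n : ℕ) :
    sphereProb (n+1) =
      ((μH[(n : ℝ)].restrict (sphere (0 : EuclideanSpace ℝ (Fin (n+1))) 1)) Set.univ)⁻¹ •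
        (μH[(n : ℝ)].restrict (sphere (0 : EuclideanSpace ℝ (Fin (n+1))) 1)) := by
  have h : ((n+1:ℕ):ℝ) - 1 = (n:ℝ) := by push_cast; ring
  simp only [sphereProb, h]

lemma sphere_univ_eq (n : ℕ) :
    (μH[(n : ℝ)].restrict (sphere (0 : EuclideanSpace ℝ (Fin (n+1))) 1)) Set.univ
      = μH[(n : ℝ)] (sphere (0 : EuclideanSpace ℝ (Fin (n+1))) 1) := by
  rw [Measure.restrict_apply_univ]

instance sphereProb_isProb (n : ℕ) : IsProbabilityMeasure (sphereProb (n+1)) := by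
  constructor
  rw [sphereProb_eq, Measure.smul_apply, smul_eq_mul, Measure.restrict_apply_univ]
  exact ENNReal.inv_mul_cancel measure_sphere_pos.ne' measure_sphere_lt_top.ne

lemma sphereProb_ae_mem (n : ℕ) :
    ∀ᵐ x ∂(sphereProb (n+1)), x ∈ sphere (0 : EuclideanSpace ℝ (Fin (n+1))) 1 := by
  rw [sphereProb_eq]
  exact ae_smul_measure (ae_restrict_mem (isClosed_sphere.measurableSet)) _

lemma integrable_of_boundOnSphere {f : EuclideanSpace ℝ (Fin (n+1)) → ℝ}
    (hf : Continuous f) (C : ℝ)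
    (hC : ∀ x ∈ sphere (0 : EuclideanSpace ℝ (Fin (n+1))) 1, |f x| ≤ C) :
    Integrable f (sphereProb (n+1)) := by
  refine Integrable.mono' (integrable_const C) hf.aestronglyMeasurable ?_
  filter_upwards [sphereProb_ae_mem n] with x hx
  rw [Real.norm_eq_abs]
  exact hC x hx

lemma sphereProb_neg_invariant (n : ℕ) :
    (sphereProb (n+1)).map (fun x => -x) = sphereProb (n+1) := by
  rw [sphereProb_eq]
  have hmbl : Measurable (fun x : EuclideanSpace ℝ (Fin (n+1)) => -x) := measurable_neg
  rw [Measure.map_smul]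
  congr 1
  have hneg : (fun x : EuclideanSpace ℝ (Fin (n+1)) => -x) ⁻¹' (sphere 0 1) = sphere 0 1 := by
    ext x
    simp [mem_sphere_iff_norm]
  have hmap : (μH[(n : ℝ)] : Measure (EuclideanSpace ℝ (Fin (n+1)))).map (fun x => -x)
      = μH[(n : ℝ)] := by
    have he : (fun x : EuclideanSpace ℝ (Fin (n+1)) => -x)
        = ⇑((LinearIsometryEquiv.neg ℝ (E := EuclideanSpace ℝ (Fin (n+1)))).toIsometryEquiv) := rfl
    rw [he, IsometryEquiv.map_hausdorffMeasure]
  calc (μH[(n : ℝ)].restrict (sphere (0 : EuclideanSpace ℝ (Fin (n+1))) 1)).map (fun x => -x)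
      = (μH[(n : ℝ)].restrict ((fun x : EuclideanSpace ℝ (Fin (n+1)) => -x) ⁻¹'
          (sphere 0 1))).map (fun x => -x) := by rw [hneg]
    _ = ((μH[(n : ℝ)] : Measure (EuclideanSpace ℝ (Fin (n+1)))).map (fun x => -x)).restrict
          (sphere 0 1) := (Measure.restrict_map hmbl isClosed_sphere.measurableSet).symm
    _ = μH[(n : ℝ)].restrict (sphere 0 1) := by rw [hmap]

lemma integral_inner_sphereProb (u₀ : EuclideanSpace ℝ (Fin (n+1))) :
    ∫ x, ⟪x, u₀⟫ ∂(sphereProb (n+1)) = 0 := by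
  have hcont : Continuous (fun x : EuclideanSpace ℝ (Fin (n+1)) => ⟪x, u₀⟫) :=
    continuous_id.inner continuous_const
  have h1 : ∫ x, ⟪x, u₀⟫ ∂(sphereProb (n+1))
      = ∫ x, ⟪-x, u₀⟫ ∂(sphereProb (n+1)) := by
    conv_lhs => rw [← sphereProb_neg_invariant n]
    rw [integral_map measurable_neg.aemeasurable]
    exact hcont.aestronglyMeasurable
  have h2 : ∫ x, ⟪-x, u₀⟫ ∂(sphereProb (n+1)) = - ∫ x, ⟪x, u₀⟫ ∂(sphereProb (n+1)) := by
    rw [← integral_neg]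
    congr 1
    funext x
    rw [inner_neg_left]
  linarith [h1, h2]

end MeasureFacts

section SuppFnFacts
variable {k m : ℕ}

lemma ciSup_eq_sup' (f : Fin (m+1) → ℝ) :
    (⨆ i, f i) = Finset.univ.sup' Finset.univ_nonempty f :=
  (Finset.sup'_univ_eq_ciSup f).symm

lemma suppFn_convexHull (w : Fin (m+1) → EuclideanSpace ℝ (Fin k))
    (u : EuclideanSpace ℝ (Fin k)) :
    suppFn (convexHull ℝ (Set.range w)) u = ⨆ i, ⟪u, w i⟫ := by
  set K := convexHull ℝ (Set.range w) with hK
  set M := ⨆ i, ⟪u, w i⟫ with hM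
  have hbdd : BddAbove (Set.range fun i => ⟪u, w i⟫) := (Set.finite_range _).bddAbove
  have hle : ∀ i, ⟪u, w i⟫ ≤ M := fun i => le_ciSup hbdd i
  have hKle : ∀ x ∈ K, ⟪u, x⟫ ≤ M := by
    intro x hx
    have hsub2 : K ⊆ {x | ⟪u, x⟫ ≤ M} := by
      rw [hK]
      apply convexHull_min
      · rintro x ⟨i, rfl⟩
        exact hle i
      · exact convex_halfSpace_le
          ⟨fun a b => inner_add_right u a b, fun c a => real_inner_smul_right u a c⟩ M
    exact hsub2 hx
  have hKne : K.Nonempty := ⟨w 0, subset_convexHull ℝ _ ⟨0, rfl⟩⟩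
  haveI : Nonempty ↥K := hKne.to_subtype
  apply le_antisymm
  · exact ciSup_le fun x => hKle x x.2
  · refine ciSup_le fun i => ?_
    have hmem : w i ∈ K := subset_convexHull ℝ _ ⟨i, rfl⟩
    have hbdd2 : BddAbove (Set.range fun x : K => ⟪u, (x : EuclideanSpace ℝ (Fin k))⟫) := by
      refine ⟨M, ?_⟩
      rintro y ⟨x, rfl⟩
      exact hKle x x.2
    exact le_ciSup hbdd2 (⟨w i, hmem⟩ : K)

lemma continuous_supInner (w : Fin (m+1) → EuclideanSpace ℝ (Fin k)) :
    Continuous (fun u : EuclideanSpace ℝ (Fin k) => ⨆ i, ⟪u, w i⟫) := by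
  have h : (fun u : EuclideanSpace ℝ (Fin k) => ⨆ i, ⟪u, w i⟫)
      = fun u => Finset.univ.sup' Finset.univ_nonempty (fun i => ⟪u, w i⟫) := by
    funext u
    exact ciSup_eq_sup' _
  rw [h]
  rw [continuous_iff_continuousAt]
  intro x
  exact Filter.Tendsto.finset_sup'_nhds_apply Finset.univ_nonempty
    (fun i _ => ((continuous_id.inner (continuous_const (y := w i)))).continuousAt)

lemma abs_supInner_le (w : Fin (m+1) → EuclideanSpace ℝ (Fin k))
    (hw : ∀ i, ‖w i‖ ≤ 1) (x : EuclideanSpace ℝ (Fin k)) (hx : ‖x‖ = 1) :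
    |⨆ i, ⟪x, w i⟫| ≤ 1 := by
  have hbd : ∀ i, |⟪x, w i⟫| ≤ 1 := by
    intro i
    calc |⟪x, w i⟫| ≤ ‖x‖ * ‖w i‖ := abs_real_inner_le_norm x (w i)
      _ ≤ 1 := by rw [hx, one_mul]; exact hw i
  rw [ciSup_eq_sup', abs_le]
  constructor
  · have h0 : -1 ≤ ⟪x, w 0⟫ := (abs_le.1 (hbd 0)).1
    calc (-1:ℝ) ≤ ⟪x, w 0⟫ := h0
      _ ≤ _ := Finset.le_sup' (fun i : Fin (m+1) => ⟪x, w i⟫) (Finset.mem_univ (0 : Fin (m+1)))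
  · exact Finset.sup'_le _ _ fun i _ => (abs_le.1 (hbd i)).2

lemma ciSup_affine (f : Fin (m+1) → ℝ) (a c : ℝ) (ha : 0 ≤ a) :
    (⨆ i, (a * f i + c)) = a * (⨆ i, f i) + c := by
  rw [ciSup_eq_sup', ciSup_eq_sup']
  exact (Finset.comp_sup'_eq_sup'_comp Finset.univ_nonempty (fun z => a * z + c)
    (fun x y => by
      have hmono : Monotone (fun z : ℝ => a * z + c) :=
        fun s t hst => by dsimp; nlinarith
      exact hmono.map_max)).symm

lemma ciSup_pair (c : ℝ) :
    (⨆ j : Fin (m+2), (if j = 0 then c else -c)) = |c| := by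
  rw [ciSup_eq_sup']
  apply le_antisymm
  · refine Finset.sup'_le _ _ fun j _ => ?_
    by_cases h : j = 0
    · simp [h, le_abs_self]
    · simp [h, neg_le_abs]
  · rcases le_total 0 c with h | h
    · have : |c| = c := abs_of_nonneg h
      rw [this]
      calc c = (if (0 : Fin (m+2)) = 0 then c else -c) := by simp
        _ ≤ _ := Finset.le_sup' (fun j : Fin (m+2) => if j = 0 then c else -c)
          (Finset.mem_univ (0 : Fin (m+2)))
    · have : |c| = -c := abs_of_nonpos h
      rw [this]
      have hne : (Fin.last (m+1)) ≠ 0 := by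
        intro hc
        have := congrArg Fin.val hc
        simp [Fin.last] at this
      calc -c = (if (Fin.last (m+1)) = 0 then c else -c) := by rw [if_neg hne]
        _ ≤ _ := Finset.le_sup' (fun j : Fin (m+2) => if j = 0 then c else -c)
          (Finset.mem_univ (Fin.last (m+1)))

end SuppFnFacts


/-- If a simplex contained in the closed unit ball maximizes the mean width among all
simplices contained in the closed unit ball, then the closed hemispheres centered at its
vertices cover the sphere. -/
theorem simplex_meanWidth_max_hemispheres_cover {d : ℕ} (hd : 1 ≤ d)
    (v : Fin (d + 1) → EuclideanSpace ℝ (Fin d))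
    (hsub : convexHull ℝ (Set.range v) ⊆ closedBall (0 : EuclideanSpace ℝ (Fin d)) 1)
    (hmax : ∀ w : Fin (d + 1) → EuclideanSpace ℝ (Fin d),
      convexHull ℝ (Set.range w) ⊆ closedBall (0 : EuclideanSpace ℝ (Fin d)) 1 →
      meanWidth (convexHull ℝ (Set.range w)) ≤ meanWidth (convexHull ℝ (Set.range v))) :
    ∀ u ∈ sphere (0 : EuclideanSpace ℝ (Fin d)) 1, ∃ i, 0 ≤ ⟪u, v i⟫ := by
  obtain ⟨n, rfl⟩ : ∃ n, d = n + 1 := ⟨d - 1, (Nat.succ_pred_eq_of_pos hd).symm⟩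
  intro u hu
  by_contra hcon
  push_neg at hcon
  have hu1 : ‖u‖ = 1 := by simpa using hu
  set μ' := sphereProb (n+1) with hμ'
  -- mean width of a hull
  have meanWidth_eq : ∀ w : Fin (n+2) → EuclideanSpace ℝ (Fin (n+1)),
      meanWidth (convexHull ℝ (Set.range w)) = 2 * ∫ x, (⨆ i, ⟪x, w i⟫) ∂μ' := by
    intro w
    rw [meanWidth]
    congr 1
    exact integral_congr_ae (Filter.Eventually.of_forall fun x => suppFn_convexHull w x)
  -- vertices are in the ball
  have hv1 : ∀ i, ‖v i‖ ≤ 1 := fun i => by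
    have := hsub (subset_convexHull ℝ _ ⟨i, rfl⟩)
    simpa [mem_closedBall, dist_zero_right] using this
  have hIv : Integrable (fun x => ⨆ i, ⟪x, v i⟫) μ' :=
    integrable_of_boundOnSphere (continuous_supInner v) 1
      (fun x hx => abs_supInner_le v hv1 x (by simpa using hx))
  -- positivity of the integral
  have hinner_single : ∀ (x : EuclideanSpace ℝ (Fin (n+1))) (i : Fin (n+1)),
      ⟪x, EuclideanSpace.single i (1:ℝ)⟫ = x i := by
    intro x i
    simp [EuclideanSpace.inner_single_right]
  have hgcont : ∀ i : Fin (n+1),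
      Continuous (fun x : EuclideanSpace ℝ (Fin (n+1)) => |⟪x, EuclideanSpace.single i (1:ℝ)⟫|) :=
    fun i => (continuous_id.inner continuous_const).abs
  have hgint : ∀ i : Fin (n+1),
      Integrable (fun x : EuclideanSpace ℝ (Fin (n+1)) => |⟪x, EuclideanSpace.single i (1:ℝ)⟫|) μ' := by
    intro i
    refine integrable_of_boundOnSphere (hgcont i) 1 (fun x hx => ?_)
    have h1 : ‖x‖ = 1 := by simpa using hx
    rw [abs_abs]
    calc |⟪x, EuclideanSpace.single i (1:ℝ)⟫| ≤ ‖x‖ * ‖EuclideanSpace.single i (1:ℝ)‖ :=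
          abs_real_inner_le_norm _ _
      _ ≤ 1 := by rw [h1, one_mul, EuclideanSpace.norm_single]; norm_num
  have hsumge : 1 ≤ ∑ i : Fin (n+1), ∫ x, |⟪x, EuclideanSpace.single i (1:ℝ)⟫| ∂μ' := by
    have hmono : ∫ _x, (1:ℝ) ∂μ' ≤
        ∫ x, ∑ i : Fin (n+1), |⟪x, EuclideanSpace.single i (1:ℝ)⟫| ∂μ' := by
      refine integral_mono_ae (integrable_const 1)
        (integrable_finset_sum _ (fun i _ => hgint i)) ?_
      filter_upwards [sphereProb_ae_mem n] with x hx
      have hx1 : ‖x‖ = 1 := by simpa using hx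
      have hxsq : ∑ i, (x i)^2 = 1 := by
        rw [← norm_sq_eq, hx1]; norm_num
      simp only [hinner_single]
      have hsq : ∑ i, (x i)^2 ≤ (∑ i, |x i|)^2 := by
        have := Finset.sum_sq_le_sq_sum_of_nonneg
          (s := Finset.univ) (f := fun i => |x i|) (fun i _ => abs_nonneg (x i))
        simpa [sq_abs] using this
      have hnn : 0 ≤ ∑ i, |x i| := Finset.sum_nonneg fun i _ => abs_nonneg _
      nlinarith
    calc (1:ℝ) = ∫ _x, (1:ℝ) ∂μ' := by rw [integral_const]; simp
      _ ≤ ∫ x, ∑ i : Fin (n+1), |⟪x, EuclideanSpace.single i (1:ℝ)⟫| ∂μ' := hmono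
      _ = ∑ i : Fin (n+1), ∫ x, |⟪x, EuclideanSpace.single i (1:ℝ)⟫| ∂μ' :=
        integral_finset_sum _ (fun i _ => hgint i)
  have hex : ∃ i : Fin (n+1), 0 < ∫ x, |⟪x, EuclideanSpace.single i (1:ℝ)⟫| ∂μ' := by
    by_contra hc
    push_neg at hc
    have : ∑ i : Fin (n+1), ∫ x, |⟪x, EuclideanSpace.single i (1:ℝ)⟫| ∂μ' ≤ 0 :=
      Finset.sum_nonpos fun i _ => hc i
    linarith
  obtain ⟨i₀, hi₀⟩ := hex
  have hA : 0 < ∫ x, (⨆ i, ⟪x, v i⟫) ∂μ' := by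
    set seg : Fin (n+2) → EuclideanSpace ℝ (Fin (n+1)) :=
      fun j => if j = 0 then EuclideanSpace.single i₀ (1:ℝ) else -(EuclideanSpace.single i₀ (1:ℝ))
      with hseg
    have hsegsub : convexHull ℝ (Set.range seg) ⊆
        closedBall (0 : EuclideanSpace ℝ (Fin (n+1))) 1 := by
      apply convexHull_min _ (convex_closedBall _ _)
      rintro x ⟨j, rfl⟩
      simp only [hseg, mem_closedBall, dist_zero_right]
      by_cases h : j = 0 <;> simp [h, EuclideanSpace.norm_single]
    have hsegval : ∀ x, (⨆ j, ⟪x, seg j⟫) = |⟪x, EuclideanSpace.single i₀ (1:ℝ)⟫| := by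
      intro x
      have heq : ∀ j : Fin (n+2), ⟪x, seg j⟫ =
          (if j = 0 then ⟪x, EuclideanSpace.single i₀ (1:ℝ)⟫
            else -⟪x, EuclideanSpace.single i₀ (1:ℝ)⟫) := by
        intro j
        by_cases h : j = 0 <;> simp [hseg, h, inner_neg_right]
      simp only [heq]
      exact ciSup_pair _
    have := hmax seg hsegsub
    rw [meanWidth_eq, meanWidth_eq] at this
    have hseg_integral : ∫ x, (⨆ j, ⟪x, seg j⟫) ∂μ'
        = ∫ x, |⟪x, EuclideanSpace.single i₀ (1:ℝ)⟫| ∂μ' := by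
      exact integral_congr_ae (Filter.Eventually.of_forall fun x => hsegval x)
    rw [hseg_integral] at this
    linarith
  -- construction of the better simplex
  have hne : Finset.univ.Nonempty (α := Fin (n+2)) := Finset.univ_nonempty
  set mx : ℝ := Finset.univ.sup' hne (fun i => ⟪u, v i⟫) with hmx
  have hmxneg : mx < 0 := by
    rw [hmx, Finset.sup'_lt_iff]
    exact fun i _ => hcon i
  set t : ℝ := min (-mx) (1/2) with ht
  have ht0 : 0 < t := lt_min (by linarith) (by norm_num)
  have ht2 : t ≤ 1/2 := min_le_right _ _
  have htle : ∀ i, ⟪u, v i⟫ ≤ -t := by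
    intro i
    have h1 : ⟪u, v i⟫ ≤ mx :=
      Finset.le_sup' (fun j : Fin (n+2) => ⟪u, v j⟫) (Finset.mem_univ i)
    have h2 : t ≤ -mx := min_le_left _ _
    linarith
  set r : ℝ := Real.sqrt (1 - t^2) with hr
  have hrsq : r^2 = 1 - t^2 := Real.sq_sqrt (by nlinarith)
  have hr0 : 0 < r := Real.sqrt_pos.2 (by nlinarith)
  have hr1 : r < 1 := by
    nlinarith
  set w : Fin (n+2) → EuclideanSpace ℝ (Fin (n+1)) :=
    fun i => r⁻¹ • (v i + t • u) with hw
  have hwnorm : ∀ i, ‖w i‖ ≤ 1 := by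
    intro i
    have hn2 : ‖v i + t • u‖^2 ≤ r^2 := by
      rw [norm_add_sq_real]
      have h1 : ⟪v i, t • u⟫ = t * ⟪u, v i⟫ := by
        rw [real_inner_smul_right, real_inner_comm]
      have h2 : ‖t • u‖ = t := by
        rw [norm_smul, hu1, Real.norm_eq_abs, abs_of_pos ht0, mul_one]
      rw [h1, h2, hrsq]
      have h3 : ‖v i‖ ≤ 1 := hv1 i
      have h4 : ⟪u, v i⟫ ≤ -t := htle i
      nlinarith [norm_nonneg (v i)]
    have hn3 : ‖v i + t • u‖ ≤ r := by
      nlinarith [norm_nonneg (v i + t • u)]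
    rw [hw]
    simp only [norm_smul, Real.norm_eq_abs, abs_of_pos (inv_pos.2 hr0)]
    calc r⁻¹ * ‖v i + t • u‖ ≤ r⁻¹ * r := by
          exact mul_le_mul_of_nonneg_left hn3 (inv_pos.2 hr0).le
      _ = 1 := inv_mul_cancel₀ hr0.ne'
  have hwsub : convexHull ℝ (Set.range w) ⊆
      closedBall (0 : EuclideanSpace ℝ (Fin (n+1))) 1 := by
    apply convexHull_min _ (convex_closedBall _ _)
    rintro x ⟨j, rfl⟩
    simpa [mem_closedBall, dist_zero_right] using hwnorm j
  have hwsup : ∀ x, (⨆ i, ⟪x, w i⟫) = r⁻¹ * (⨆ i, ⟪x, v i⟫) + r⁻¹ * (t * ⟪x, u⟫) := by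
    intro x
    have heq : ∀ i, ⟪x, w i⟫ = r⁻¹ * ⟪x, v i⟫ + r⁻¹ * (t * ⟪x, u⟫) := by
      intro i
      rw [hw]
      simp only [real_inner_smul_right, inner_add_right]
      ring
    simp only [heq]
    have := ciSup_affine (fun i : Fin (n+2) => ⟪x, v i⟫) r⁻¹ (r⁻¹ * (t * ⟪x, u⟫))
      (inv_pos.2 hr0).le
    simpa using this
  have hIu : Integrable (fun x : EuclideanSpace ℝ (Fin (n+1)) => ⟪x, u⟫) μ' := by
    refine integrable_of_boundOnSphere (continuous_id.inner continuous_const) 1 (fun x hx => ?_)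
    have h1 : ‖x‖ = 1 := by simpa using hx
    calc |⟪x, u⟫| ≤ ‖x‖ * ‖u‖ := abs_real_inner_le_norm _ _
      _ ≤ 1 := by rw [h1, hu1]; norm_num
  have hw_integral : ∫ x, (⨆ i, ⟪x, w i⟫) ∂μ'
      = r⁻¹ * ∫ x, (⨆ i, ⟪x, v i⟫) ∂μ' := by
    rw [integral_congr_ae (Filter.Eventually.of_forall fun x => hwsup x)]
    rw [integral_add (hIv.const_mul r⁻¹) ((hIu.const_mul t).const_mul r⁻¹)]
    rw [integral_const_mul, integral_const_mul, integral_const_mul,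
      integral_inner_sphereProb u]
    ring
  have hfin := hmax w hwsub
  rw [meanWidth_eq, meanWidth_eq, hw_integral] at hfin
  have hinv : 1 < r⁻¹ := (one_lt_inv₀ hr0).2 hr1
  nlinarith
end

section
/- For a right spherical triangle with legs \(a,b\), hypotenuse \(c\), and angles \(A,B\) opposite the legs (right angle at \(C\)), the partial derivatives of the side lengths with respect to the angles satisfy \(\partial a/\partial A = 1/\sin b\), \(\partial b/\partial A = \cos a \cos b/\sin a\), \(\partial a/\partial B = \cos a\cos b/\sin b\), and \(\partial b/\partial B = 1/\sin a\). -/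
/-!
Write `a = arccos (cos A / sin B)` and `b = arccos (cos B / sin A)`. Differentiating `arccos`
gives `∂(arccos u) = -∂u / sin (arccos u)`, so every partial derivative is an explicit
expression in `sin A, cos A, sin B, cos B, sin a, sin b`. They reduce to the claimed values by
the law of sines `sin a * sin B = sin b * sin A`, which holds because both sides equal
`√(1 - cos² A - cos² B)`.
-/

open Real Set

theorem HasDerivAt.arccos {f : ℝ → ℝ} {f' x : ℝ} (hf : HasDerivAt f f' x)
    (h₁ : f x ≠ -1) (h₂ : f x ≠ 1) :
    HasDerivAt (fun y => arccos (f y)) (-f' / Real.sin (arccos (f x))) x := by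
  refine ((hasDerivAt_arccos h₁ h₂).comp x hf).congr_deriv ?_
  rw [sin_arccos]
  ring

section RightTriangle

variable {P Q : ℝ}

lemma abs_cos_div_sin_lt_one (hQ : 0 < sin Q) (hR : cos P ^ 2 + cos Q ^ 2 < 1) :
    |cos P / sin Q| < 1 := by
  rw [← sq_lt_one_iff_abs_lt_one, div_pow, div_lt_one (by positivity)]
  nlinarith [sin_sq_add_cos_sq Q]

lemma sin_arccos_cos_div_sin_pos (hQ : 0 < sin Q) (hR : cos P ^ 2 + cos Q ^ 2 < 1) :
    0 < sin (arccos (cos P / sin Q)) := by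
  obtain ⟨hlo, hhi⟩ := abs_lt.mp (abs_cos_div_sin_lt_one hQ hR)
  exact sin_pos_of_pos_of_lt_pi (arccos_pos.mpr hhi) (arccos_lt_pi.mpr hlo)

lemma sin_arccos_cos_div_sin_mul_sin (hQ : 0 < sin Q) :
    sin (arccos (cos P / sin Q)) * sin Q = √(1 - cos P ^ 2 - cos Q ^ 2) := by
  have hsin : 1 - cos Q ^ 2 = sin Q ^ 2 := by rw [← sin_sq_add_cos_sq Q]; ring
  have hfactor : 1 - cos P ^ 2 - cos Q ^ 2 = sin Q ^ 2 * (1 - (cos P / sin Q) ^ 2) := by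
    field_simp
    linarith
  rw [sin_arccos, hfactor, sqrt_mul (sq_nonneg _), sqrt_sq hQ.le, mul_comm]

lemma sin_arccos_cos_div_sin_mul_sin_comm (hP : 0 < sin P) (hQ : 0 < sin Q) :
    sin (arccos (cos P / sin Q)) * sin Q = sin (arccos (cos Q / sin P)) * sin P := by
  rw [sin_arccos_cos_div_sin_mul_sin hQ, sin_arccos_cos_div_sin_mul_sin hP]
  ring_nf

lemma hasDerivAt_arccos_cos_div_const (hP : 0 < sin P) (hQ : 0 < sin Q)
    (hR : cos P ^ 2 + cos Q ^ 2 < 1) :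
    HasDerivAt (fun x => arccos (cos x / sin Q)) (1 / sin (arccos (cos Q / sin P))) P := by
  obtain ⟨hlo, hhi⟩ := abs_lt.mp (abs_cos_div_sin_lt_one hQ hR)
  have hsa := sin_arccos_cos_div_sin_pos hQ hR
  have hsb := sin_arccos_cos_div_sin_pos hP (by linarith : cos Q ^ 2 + cos P ^ 2 < 1)
  have hsines := sin_arccos_cos_div_sin_mul_sin_comm hP hQ
  refine (((hasDerivAt_cos P).div_const (sin Q)).arccos hlo.ne' hhi.ne).congr_deriv ?_
  field_simp
  linarith

lemma hasDerivAt_arccos_const_div_sin (hP : 0 < sin P) (hQ : 0 < sin Q)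
    (hR : cos P ^ 2 + cos Q ^ 2 < 1) :
    HasDerivAt (fun x => arccos (cos Q / sin x))
      (cos (arccos (cos P / sin Q)) * cos (arccos (cos Q / sin P)) /
        sin (arccos (cos P / sin Q))) P := by
  have hR' : cos Q ^ 2 + cos P ^ 2 < 1 := by linarith
  obtain ⟨hlo, hhi⟩ := abs_lt.mp (abs_cos_div_sin_lt_one hP hR')
  obtain ⟨hlo', hhi'⟩ := abs_lt.mp (abs_cos_div_sin_lt_one hQ hR)
  have hsa := sin_arccos_cos_div_sin_pos hQ hR
  have hsb := sin_arccos_cos_div_sin_pos hP hR'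
  have hsines := sin_arccos_cos_div_sin_mul_sin_comm hP hQ
  refine (((hasDerivAt_const P (cos Q)).fun_div (hasDerivAt_sin P) hP.ne').arccos
    hlo.ne' hhi.ne).congr_deriv ?_
  rw [cos_arccos hlo.le hhi.le, cos_arccos hlo'.le hhi'.le]
  field_simp
  linear_combination cos Q * cos P * hsines

end RightTriangle

/-- For a right spherical triangle with right angle at `C`, determined by its angles
`A, B`, the legs `a = arccos(cos A / sin B)` and `b = arccos(cos B / sin A)` (Napier's
rules) satisfy `∂a/∂A = 1/sin b`, `∂b/∂A = cos a cos b / sin a`,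
`∂a/∂B = cos a cos b / sin b`, `∂b/∂B = 1/sin a`. -/
theorem partials_of_sides (A B : ℝ)
    (hA : A ∈ Ioo 0 (π / 2)) (hB : B ∈ Ioo 0 (π / 2))
    (hR : cos A ^ 2 + cos B ^ 2 < 1) :
    (let a := Real.arccos (cos A / sin B); let b := Real.arccos (cos B / sin A);
    HasDerivAt (fun x => Real.arccos (cos x / sin B)) (1 / sin b) A ∧
    HasDerivAt (fun x => Real.arccos (cos B / sin x)) (cos a * cos b / sin a) A ∧
    HasDerivAt (fun y => Real.arccos (cos A / sin y)) (cos a * cos b / sin b) B ∧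
    HasDerivAt (fun y => Real.arccos (cos y / sin A)) (1 / sin a) B) := by
  intro a b
  have hsA : 0 < sin A := sin_pos_of_pos_of_lt_pi hA.1 (by linarith [hA.2, pi_pos])
  have hsB : 0 < sin B := sin_pos_of_pos_of_lt_pi hB.1 (by linarith [hB.2, pi_pos])
  have hR' : cos B ^ 2 + cos A ^ 2 < 1 := by linarith
  refine ⟨hasDerivAt_arccos_cos_div_const hsA hsB hR, hasDerivAt_arccos_const_div_sin hsA hsB hR,
    ?_, hasDerivAt_arccos_cos_div_const hsB hsA hR'⟩
  rw [mul_comm]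
  exact hasDerivAt_arccos_const_div_sin hsB hsA hR'
end
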